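/- arXiv:2006.01480 — 6 statements merged into one kernel-verified Lean document; each statement's English description precedes it below -/
import Mathlib

section
/- Let S be a numerical semigroup with multiplicity m, conductor c, depth q = ⌈c/m⌉ and offset ρ = qm − c, and define S_j = S ∩ [jm−ρ, (j+1)m−ρ). Then for all j ≥ 1, S_1 + S_j ⊆ S_{1+j} ∪ S_{2+j}. -/
/-! Since `ρ < m`, an element of `S_1` is nonzero and hence at least `m`; adding it to an element of
`S_j` moves `x + y + ρ` into `[(1 + j) m, (3 + j) m)`, the union of the windows of index `1 + j`
and `2 + j`. -/

theorem Nat.div_ceil_mul_sub_lt (c : ℕ) {m : ℕ} (hm : m ≠ 0) : (c + m - 1) / m * m - c < m := by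
  have := Nat.div_mul_le_self (c + m - 1) m
  omega

theorem Nat.add_mem_window_or_next {m ρ x y : ℕ} (j : ℕ) (hmx : m ≤ x) (hx₂ : x + ρ < 2 * m)
    (hy₁ : j * m ≤ y + ρ) (hy₂ : y + ρ < (j + 1) * m) :
    ((1 + j) * m ≤ x + y + ρ ∧ x + y + ρ < (2 + j) * m) ∨
      ((2 + j) * m ≤ x + y + ρ ∧ x + y + ρ < (3 + j) * m) := by
  simp only [Nat.add_mul] at hy₂ ⊢
  omega

theorem stmt3_general (S : Set ℕ)
    (m : ℕ) (hm : m ∈ S ∧ m ≠ 0 ∧ ∀ x ∈ S, x ≠ 0 → m ≤ x)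
    (c : ℕ)
    (q ρ : ℕ) (hq : q = (c + m - 1) / m) (hρ : ρ = q * m - c) :
    ∀ j : ℕ, 1 ≤ j →
    ∀ x ∈ S, ∀ y ∈ S,
      (1 * m ≤ x + ρ ∧ x + ρ < 2 * m) →
      (j * m ≤ y + ρ ∧ y + ρ < (j + 1) * m) →
      ((1 + j) * m ≤ x + y + ρ ∧ x + y + ρ < (2 + j) * m) ∨
      ((2 + j) * m ≤ x + y + ρ ∧ x + y + ρ < (3 + j) * m) := by
  rintro j - x hx y - ⟨hx₁, hx₂⟩ ⟨hy₁, hy₂⟩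
  obtain ⟨-, hm0, hmin⟩ := hm
  have hρm : ρ < m := hρ ▸ hq ▸ Nat.div_ceil_mul_sub_lt c hm0
  have hmx : m ≤ x := hmin x hx (by omega)
  exact Nat.add_mem_window_or_next j hmx hx₂ hy₁ hy₂

theorem stmt3 (S : Set ℕ)
    (h0 : 0 ∈ S)
    (hadd : ∀ a ∈ S, ∀ b ∈ S, a + b ∈ S)
    (hfin : (Sᶜ : Set ℕ).Finite)
    (m : ℕ) (hm : m ∈ S ∧ m ≠ 0 ∧ ∀ x ∈ S, x ≠ 0 → m ≤ x)
    (c : ℕ) (hc : (∀ x, c ≤ x → x ∈ S) ∧ ∀ c', (∀ x, c' ≤ x → x ∈ S) → c ≤ c')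
    (q ρ : ℕ) (hq : q = (c + m - 1) / m) (hρ : ρ = q * m - c) :
    ∀ j : ℕ, 1 ≤ j →
    ∀ x ∈ S, ∀ y ∈ S,
      (1 * m ≤ x + ρ ∧ x + ρ < 2 * m) →
      (j * m ≤ y + ρ ∧ y + ρ < (j + 1) * m) →
      ((1 + j) * m ≤ x + y + ρ ∧ x + y + ρ < (2 + j) * m) ∨
      ((2 + j) * m ≤ x + y + ρ ∧ x + y + ρ < (3 + j) * m) :=
  stmt3_general S m hm c q ρ hq hρ
end

section
/- Let S be a numerical semigroup with level function λ. For all nonzero a, x, y ∈ S, if λ(a+x) = λ(a+y), then |λ(y) − λ(x)| ≤ 1. -/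
namespace Nat

theorem lt_add_of_div_eq {a b m : ℕ} (hm : 0 < m) (h : a / m = b / m) : a < b + m :=
  calc a < a / m * m + m := lt_div_mul_add hm
    _ = b / m * m + m := by rw [h]
    _ ≤ b + m := Nat.add_le_add_right (div_mul_le_self b m) m

theorem div_le_div_add_one_of_le_add {a b m : ℕ} (h : a ≤ b + m) : a / m ≤ b / m + 1 := by
  rcases m.eq_zero_or_pos with rfl | hm
  · simp
  · calc a / m ≤ (b + m) / m := Nat.div_le_div_right h
      _ = b / m + 1 := add_div_right b hm

theorem abs_div_sub_div_le_one_of_add_div_eq {k a b m : ℕ} (hm : 0 < m)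
    (h : (k + a) / m = (k + b) / m) : |(b / m : ℤ) - (a / m : ℤ)| ≤ 1 := by
  have hab : a ≤ b + m := by have := lt_add_of_div_eq hm h; omega
  have hba : b ≤ a + m := by have := lt_add_of_div_eq hm h.symm; omega
  have := div_le_div_add_one_of_le_add hab
  have := div_le_div_add_one_of_le_add hba
  rw [abs_le]
  omega

end Nat

theorem stmt6_general (S : Set ℕ)
    (m : ℕ) (hm : m ∈ S ∧ m ≠ 0 ∧ ∀ x ∈ S, x ≠ 0 → m ≤ x)
    (ρ : ℕ)
    (lvl : ℕ → ℕ) (hlvl : ∀ x, lvl x = (x + ρ) / m) :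
    ∀ a ∈ S, ∀ x ∈ S, ∀ y ∈ S, a ≠ 0 → x ≠ 0 → y ≠ 0 →
      lvl (a + x) = lvl (a + y) → |(lvl y : ℤ) - (lvl x : ℤ)| ≤ 1 := by
  intro a _ x _ y _ _ _ _ heq
  simp only [hlvl, add_assoc] at heq ⊢
  exact Nat.abs_div_sub_div_le_one_of_add_div_eq (Nat.pos_of_ne_zero hm.2.1) heq

theorem stmt6 (S : Set ℕ)
    (h0 : 0 ∈ S)
    (hadd : ∀ a ∈ S, ∀ b ∈ S, a + b ∈ S)
    (hfin : (Sᶜ : Set ℕ).Finite)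
    (m : ℕ) (hm : m ∈ S ∧ m ≠ 0 ∧ ∀ x ∈ S, x ≠ 0 → m ≤ x)
    (c : ℕ) (hc : (∀ x, c ≤ x → x ∈ S) ∧ ∀ c', (∀ x, c' ≤ x → x ∈ S) → c ≤ c')
    (q ρ : ℕ) (hq : q = (c + m - 1) / m) (hρ : ρ = q * m - c)
    (lvl : ℕ → ℕ) (hlvl : ∀ x, lvl x = (x + ρ) / m) :
    ∀ a ∈ S, ∀ x ∈ S, ∀ y ∈ S, a ≠ 0 → x ≠ 0 → y ≠ 0 →
      lvl (a + x) = lvl (a + y) → |(lvl y : ℤ) - (lvl x : ℤ)| ≤ 1 :=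
  stmt6_general S m hm ρ lvl hlvl
end

section
/- Let S be a numerical semigroup with Apéry set A (with respect to the multiplicity m), and define A_i = A ∩ [im−ρ,(i+1)m−ρ) where q = ⌈c/m⌉ and ρ = qm−c. If for some k ≥ 2 one has A_k ≠ ∅ and A_i = ∅ for all 1 ≤ i ≤ k−1, then every element of A_k is primitive. -/
/-!
If `z = x + y` with `x, y` nonzero elements of `S` and `z` in the Apéry set `A`, then `x` and `y`
lie in `A` as well. A nonzero element of `A` is at least `m`, so it is not in the level `A_0`; as the
levels `A_1, …, A_{k-1}` are empty, `x + ρ` and `y + ρ` are at least `k m`. Since `ρ < m` and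
`k ≥ 2`, this forces `z + ρ ≥ 2 k m - ρ > (k + 1) m`, so `z ∉ A_k`.
-/

def aperySet (S : Set ℕ) (m : ℕ) : Set ℕ := {x ∈ S | ¬ ∃ s ∈ S, x = m + s}

theorem mem_aperySet_of_add_mem {S : Set ℕ} (hadd : ∀ a ∈ S, ∀ b ∈ S, a + b ∈ S) {m a b : ℕ}
    (ha : a ∈ S) (hb : b ∈ S) (hab : a + b ∈ aperySet S m) : a ∈ aperySet S m := by
  refine ⟨ha, ?_⟩
  rintro ⟨s, hs, rfl⟩
  exact hab.2 ⟨s + b, hadd s hs b hb, by rw [add_assoc]⟩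

theorem ceil_div_mul_sub_lt {c m : ℕ} (hm : 0 < m) : (c + m - 1) / m * m - c < m := by
  have := Nat.div_mul_le_self (c + m - 1) m
  have := Nat.lt_div_mul_add (a := c + m - 1) hm
  omega

theorem mul_le_add_of_levels_empty {A : Set ℕ} {m ρ k w : ℕ} (hm : 0 < m) (hw : w ∈ A)
    (hmw : m ≤ w)
    (hempty : ∀ i, 1 ≤ i → i ≤ k - 1 → {x ∈ A | i * m ≤ x + ρ ∧ x + ρ < (i + 1) * m} = ∅) :
    k * m ≤ w + ρ := by
  obtain ⟨i, hlo, hhi⟩ : ∃ i, i * m ≤ w + ρ ∧ w + ρ < (i + 1) * m :=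
    ⟨(w + ρ) / m, Nat.div_mul_le_self _ _, by rw [Nat.succ_mul]; exact Nat.lt_div_mul_add hm⟩
  have hi : 1 ≤ i := by
    by_contra h0
    rw [show i = 0 by omega, zero_add, one_mul] at hhi
    omega
  by_contra! hlt
  have hik : i ≤ k - 1 := by
    by_contra! hki
    have := Nat.mul_le_mul_right m (show k ≤ i by omega)
    omega
  exact (hempty i hi hik).subset ⟨hw, hlo, hhi⟩

theorem stmt9_general (S : Set ℕ)
    (hadd : ∀ a ∈ S, ∀ b ∈ S, a + b ∈ S)
    (m : ℕ) (hm : m ∈ S ∧ m ≠ 0 ∧ ∀ x ∈ S, x ≠ 0 → m ≤ x)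
    (c : ℕ)
    (q ρ : ℕ) (hq : q = (c + m - 1) / m) (hρ : ρ = q * m - c)
    (A : Set ℕ) (hA : A = {x ∈ S | ¬ ∃ s ∈ S, x = m + s})
    (Ai : ℕ → Set ℕ)
    (hAi : ∀ i, Ai i = {x ∈ A | i * m ≤ x + ρ ∧ x + ρ < (i + 1) * m}) :
    ∀ k : ℕ, 2 ≤ k → (Ai k).Nonempty →
      (∀ i, 1 ≤ i → i ≤ k - 1 → Ai i = ∅) →
      ∀ z ∈ Ai k, ¬ ∃ x ∈ S, ∃ y ∈ S, x ≠ 0 ∧ y ≠ 0 ∧ x + y = z := by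
  obtain ⟨-, hm0, hmin⟩ := hm
  have hmpos : 0 < m := Nat.pos_of_ne_zero hm0
  change A = aperySet S m at hA
  intro k hk _ hempty z hz
  simp only [hAi] at hz hempty
  obtain ⟨hzA, -, hzhi⟩ := hz
  rintro ⟨x, hxS, y, hyS, hx0, hy0, rfl⟩
  rw [hA] at hzA hempty
  have hxA : x ∈ aperySet S m := mem_aperySet_of_add_mem hadd hxS hyS hzA
  have hyA : y ∈ aperySet S m := mem_aperySet_of_add_mem hadd hyS hxS (add_comm x y ▸ hzA)
  have hx := mul_le_add_of_levels_empty hmpos hxA (hmin x hxS hx0) hempty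
  have hy := mul_le_add_of_levels_empty hmpos hyA (hmin y hyS hy0) hempty
  have hρm : ρ < m := hρ ▸ hq ▸ ceil_div_mul_sub_lt hmpos
  have h2m : 2 * m ≤ k * m := Nat.mul_le_mul_right m hk
  rw [Nat.succ_mul] at hzhi
  omega

theorem stmt9 (S : Set ℕ)
    (h0 : 0 ∈ S)
    (hadd : ∀ a ∈ S, ∀ b ∈ S, a + b ∈ S)
    (hfin : (Sᶜ : Set ℕ).Finite)
    (m : ℕ) (hm : m ∈ S ∧ m ≠ 0 ∧ ∀ x ∈ S, x ≠ 0 → m ≤ x)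
    (c : ℕ) (hc : (∀ x, c ≤ x → x ∈ S) ∧ ∀ c', (∀ x, c' ≤ x → x ∈ S) → c ≤ c')
    (q ρ : ℕ) (hq : q = (c + m - 1) / m) (hρ : ρ = q * m - c)
    (A : Set ℕ) (hA : A = {x ∈ S | ¬ ∃ s ∈ S, x = m + s})
    (Ai : ℕ → Set ℕ)
    (hAi : ∀ i, Ai i = {x ∈ A | i * m ≤ x + ρ ∧ x + ρ < (i + 1) * m}) :
    ∀ k : ℕ, 2 ≤ k → (Ai k).Nonempty →
      (∀ i, 1 ≤ i → i ≤ k - 1 → Ai i = ∅) →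
      ∀ z ∈ Ai k, ¬ ∃ x ∈ S, ∃ y ∈ S, x ≠ 0 ∧ y ≠ 0 ∧ x + y = z :=
  stmt9_general S hadd m hm c q ρ hq hρ A hA Ai hAi
end

section
/- Let S be a numerical semigroup with multiplicity m, conductor c, depth q = ⌈c/m⌉, offset ρ = qm−c, and level function λ. Let A = S \ (m+S) and let C = {z ∈ A : z decomposable, and z = x+y for some nonzero x,y ∈ S with λ(z) < λ(x)+λ(y)}. Then ρ ≥ |C|. -/
theorem Nat.sub_le_mod_of_div_lt_div_add_div {m ρ x y : ℕ}
    (h : (x + y + ρ) / m < (x + ρ) / m + (y + ρ) / m) : m - ρ ≤ (x + y + ρ) % m := by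
  by_contra! hr
  have hρ : ρ % m = ρ := Nat.mod_eq_of_lt (by omega)
  have hshift : (x + y + ρ + ρ) / m = (x + y + ρ) / m := by
    rw [Nat.add_div_eq_of_add_mod_lt (by omega), Nat.div_eq_of_lt (a := ρ) (by omega), add_zero]
  have hsuper : (x + ρ) / m + (y + ρ) / m ≤ (x + y + ρ + ρ) / m :=
    Nat.div_add_div_le_add_div.trans_eq (by rw [show x + ρ + (y + ρ) = x + y + ρ + ρ by ring])
  omega

section Apery

variable {S : Set ℕ} {m : ℕ}

theorem add_mul_mem (hadd : ∀ a ∈ S, ∀ b ∈ S, a + b ∈ S) (hm : m ∈ S) {a : ℕ} (ha : a ∈ S)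
    (k : ℕ) : a + m * k ∈ S := by
  induction k with
  | zero => simpa using ha
  | succ k ih => simpa [mul_add, ← add_assoc] using hadd _ ih _ hm

theorem exists_eq_add_of_modEq_of_lt (hadd : ∀ a ∈ S, ∀ b ∈ S, a + b ∈ S) (hm : m ∈ S)
    {a b : ℕ} (ha : a ∈ S) (hab : a ≡ b [MOD m]) (hlt : a < b) : ∃ s ∈ S, b = m + s := by
  obtain ⟨k, hk⟩ := (Nat.modEq_iff_dvd' hlt.le).mp hab
  obtain ⟨k, rfl⟩ := Nat.exists_eq_succ_of_ne_zero (by rintro rfl; omega : k ≠ 0)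
  refine ⟨a + m * k, add_mul_mem hadd hm ha k, ?_⟩
  rw [Nat.mul_succ] at hk
  omega

theorem injOn_add_mod_aperySet (hadd : ∀ a ∈ S, ∀ b ∈ S, a + b ∈ S) (hm : m ∈ S) (ρ : ℕ) :
    Set.InjOn (fun z => (z + ρ) % m) (aperySet S m) := by
  intro a ha b hb hab
  have hmod : a ≡ b [MOD m] := Nat.ModEq.add_right_cancel' ρ hab
  by_contra hne
  rcases Nat.lt_or_gt_of_ne hne with h | h
  · exact hb.2 (exists_eq_add_of_modEq_of_lt hadd hm ha.1 hmod h)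
  · exact ha.2 (exists_eq_add_of_modEq_of_lt hadd hm hb.1 hmod.symm h)

theorem ncard_le_of_subset_aperySet_of_le_mod (hadd : ∀ a ∈ S, ∀ b ∈ S, a + b ∈ S) (hm : m ∈ S)
    (hm0 : 0 < m) {ρ : ℕ} {C : Set ℕ}
    (hC : ∀ z ∈ C, z ∈ aperySet S m ∧ m - ρ ≤ (z + ρ) % m) : C.ncard ≤ ρ := by
  have hmaps : Set.MapsTo (fun z => (z + ρ) % m) C (Set.Ico (m - ρ) m) :=
    fun z hz => ⟨(hC z hz).2, Nat.mod_lt _ hm0⟩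
  have hinj : Set.InjOn (fun z => (z + ρ) % m) C :=
    (injOn_add_mod_aperySet hadd hm ρ).mono fun z hz => (hC z hz).1
  calc C.ncard ≤ (Set.Ico (m - ρ) m).ncard :=
        Set.ncard_le_ncard_of_injOn _ hmaps hinj (Set.finite_Ico _ _)
    _ ≤ ρ := by
        rw [← Finset.coe_Ico, Set.ncard_coe_finset, Nat.card_Ico]
        omega

end Apery

theorem stmt10_general (S : Set ℕ)
    (hadd : ∀ a ∈ S, ∀ b ∈ S, a + b ∈ S)
    (m : ℕ) (hm : m ∈ S ∧ m ≠ 0 ∧ ∀ x ∈ S, x ≠ 0 → m ≤ x)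
    (ρ : ℕ)
    (lvl : ℕ → ℕ) (hlvl : ∀ x, lvl x = (x + ρ) / m)
    (A : Set ℕ) (hA : A = {x ∈ S | ¬ ∃ s ∈ S, x = m + s})
    (C : Set ℕ)
    (hC : C = {z ∈ A | ∃ x ∈ S, ∃ y ∈ S, x ≠ 0 ∧ y ≠ 0 ∧ z = x + y ∧
      lvl z < lvl x + lvl y}) :
    C.ncard ≤ ρ := by
  subst hA hC
  refine ncard_le_of_subset_aperySet_of_le_mod hadd hm.1 (Nat.pos_of_ne_zero hm.2.1)
    fun z ⟨hzA, x, _, y, _, _, _, hz, hlt⟩ => ⟨hzA, ?_⟩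
  simp only [hlvl, hz] at hlt ⊢
  exact Nat.sub_le_mod_of_div_lt_div_add_div hlt

theorem stmt10 (S : Set ℕ)
    (h0 : 0 ∈ S)
    (hadd : ∀ a ∈ S, ∀ b ∈ S, a + b ∈ S)
    (hfin : (Sᶜ : Set ℕ).Finite)
    (m : ℕ) (hm : m ∈ S ∧ m ≠ 0 ∧ ∀ x ∈ S, x ≠ 0 → m ≤ x)
    (c : ℕ) (hc : (∀ x, c ≤ x → x ∈ S) ∧ ∀ c', (∀ x, c' ≤ x → x ∈ S) → c ≤ c')
    (q ρ : ℕ) (hq : q = (c + m - 1) / m) (hρ : ρ = q * m - c)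
    (lvl : ℕ → ℕ) (hlvl : ∀ x, lvl x = (x + ρ) / m)
    (A : Set ℕ) (hA : A = {x ∈ S | ¬ ∃ s ∈ S, x = m + s})
    (C : Set ℕ)
    (hC : C = {z ∈ A | ∃ x ∈ S, ∃ y ∈ S, x ≠ 0 ∧ y ≠ 0 ∧ z = x + y ∧
      lvl z < lvl x + lvl y}) :
    C.ncard ≤ ρ :=
  stmt10_general S hadd m hm ρ lvl hlvl A hA C hC
end

section
/- Let S be a numerical semigroup with multiplicity m, conductor c, depth q = ⌈c/m⌉, offset ρ = qm−c, left part L = S ∩ [0,c), and Apéry pieces A_i = (S \ (m+S)) ∩ [im−ρ,(i+1)m−ρ) with α_i = |A_i|. Then |L| = Σ_{i=0}^{q−1} (q−i)·α_i. -/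
/-!
Every element of `S` is uniquely `a + k * m` with `a` in the Apéry set `A` of `m`. Writing
`q * m = c + ρ`, the condition `a + k * m < c` becomes `(a + ρ) / m + k < q`, so an Apéry
element `a` with `(a + ρ) / m = i` contributes exactly the `q - i` elements `a + k * m`,
`k < q - i`, to `S ∩ [0, c)`.
-/

namespace NumericalSemigroup

open Finset

def apery (S : Set ℕ) (m : ℕ) : Set ℕ := {x ∈ S | ¬ ∃ s ∈ S, x = m + s}

variable {S : Set ℕ} {m : ℕ}

theorem apery_subset : apery S m ⊆ S := fun _ hx => hx.1

theorem add_mul_mem (hadd : ∀ a ∈ S, ∀ b ∈ S, a + b ∈ S) (hm : m ∈ S) {a : ℕ} (ha : a ∈ S) :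
    ∀ k : ℕ, a + k * m ∈ S
  | 0 => by simpa using ha
  | k + 1 => by
    rw [add_mul, one_mul, ← add_assoc]
    exact hadd _ (add_mul_mem hadd hm ha k) _ hm

theorem exists_mem_apery_add_mul (hm : m ≠ 0) {x : ℕ} (hx : x ∈ S) :
    ∃ a ∈ apery S m, ∃ k, x = a + k * m := by
  induction x using Nat.strong_induction_on with
  | _ x ih =>
    by_cases hxA : x ∈ apery S m
    · exact ⟨x, hxA, 0, by simp⟩
    · obtain ⟨s, hs, rfl⟩ : ∃ s ∈ S, x = m + s := by
        simpa [apery, hx] using hxA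
      obtain ⟨a, ha, k, rfl⟩ := ih s (by omega) hs
      exact ⟨a, ha, k + 1, by ring⟩

theorem add_succ_mul_notMem_apery (hadd : ∀ a ∈ S, ∀ b ∈ S, a + b ∈ S) (hm : m ∈ S)
    {a : ℕ} (ha : a ∈ S) (j : ℕ) : a + (j + 1) * m ∉ apery S m :=
  fun h => h.2 ⟨a + j * m, add_mul_mem hadd hm ha j, by ring⟩

theorem eq_of_apery_add_mul_eq (hadd : ∀ a ∈ S, ∀ b ∈ S, a + b ∈ S) (hm : m ∈ S)
    {a a' k k' : ℕ} (ha : a ∈ apery S m) (ha' : a' ∈ apery S m)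
    (h : a + k * m = a' + k' * m) : a = a' ∧ k = k' := by
  rcases lt_trichotomy k k' with hk | rfl | hk
  · obtain ⟨j, rfl⟩ := Nat.exists_eq_add_of_lt hk
    refine absurd ?_ (add_succ_mul_notMem_apery hadd hm (apery_subset ha') j)
    convert ha using 1
    linarith
  · exact ⟨by omega, rfl⟩
  · obtain ⟨j, rfl⟩ := Nat.exists_eq_add_of_lt hk
    refine absurd ?_ (add_succ_mul_notMem_apery hadd hm (apery_subset ha) j)
    convert ha' using 1
    linarith

theorem add_mul_lt_iff {a k c q ρ : ℕ} (hm : 0 < m) (hqm : q * m = c + ρ) :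
    a + k * m < c ↔ (a + ρ) / m + k < q := by
  rw [← Nat.add_mul_div_right _ _ hm, Nat.div_lt_iff_lt_mul hm]
  omega

theorem finite_apery_div_eq (hm : 0 < m) (ρ i : ℕ) :
    {a ∈ apery S m | (a + ρ) / m = i}.Finite :=
  (Set.finite_Iio ((i + 1) * m)).subset fun a ha => by
    have := Nat.lt_div_mul_add (a := a + ρ) hm
    simp only [Set.mem_Iio, ← ha.2]
    linarith

theorem mem_lt_iff_exists_apery (hadd : ∀ a ∈ S, ∀ b ∈ S, a + b ∈ S) (hmS : m ∈ S)
    (hm : 0 < m) {c q ρ x : ℕ} (hqm : q * m = c + ρ) :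
    x ∈ {x ∈ S | x < c} ↔ ∃ a ∈ apery S m, ∃ k, (a + ρ) / m + k < q ∧ x = a + k * m := by
  constructor
  · rintro ⟨hxS, hxc⟩
    obtain ⟨a, ha, k, rfl⟩ := exists_mem_apery_add_mul hm.ne' hxS
    exact ⟨a, ha, k, (add_mul_lt_iff hm hqm).1 hxc, rfl⟩
  · rintro ⟨a, ha, k, hk, rfl⟩
    exact ⟨add_mul_mem hadd hmS (apery_subset ha) k, (add_mul_lt_iff hm hqm).2 hk⟩

theorem ncard_lt_eq_sum_apery (hadd : ∀ a ∈ S, ∀ b ∈ S, a + b ∈ S) (hmS : m ∈ S) (hm : 0 < m)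
    {c q ρ : ℕ} (hqm : q * m = c + ρ) :
    {x ∈ S | x < c}.ncard =
      ∑ i ∈ range q, (q - i) * {a ∈ apery S m | (a + ρ) / m = i}.ncard := by
  let B i := (finite_apery_div_eq (S := S) hm ρ i).toFinset
  let T := (range q).sigma fun i => range (q - i) ×ˢ B i
  have hB (i a : ℕ) : a ∈ B i ↔ a ∈ apery S m ∧ (a + ρ) / m = i := Set.Finite.mem_toFinset _
  have hT (i k a : ℕ) : (⟨i, k, a⟩ : Σ _ : ℕ, ℕ × ℕ) ∈ T ↔
      i < q ∧ k < q - i ∧ a ∈ apery S m ∧ (a + ρ) / m = i := by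
    simp only [T, mem_sigma, mem_product, mem_range, hB]
  have himage : {x ∈ S | x < c} = (fun p : Σ _ : ℕ, ℕ × ℕ => p.2.2 + p.2.1 * m) '' T := by
    ext x
    rw [mem_lt_iff_exists_apery hadd hmS hm hqm]
    constructor
    · rintro ⟨a, ha, k, hk, rfl⟩
      exact ⟨⟨(a + ρ) / m, k, a⟩, (hT ..).2 ⟨by omega, by omega, ha, rfl⟩, rfl⟩
    · rintro ⟨⟨i, k, a⟩, hp, rfl⟩
      obtain ⟨-, hk, ha, rfl⟩ := (hT ..).1 hp
      exact ⟨a, ha, k, by omega, rfl⟩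
  have hinj : Set.InjOn (fun p : Σ _ : ℕ, ℕ × ℕ => p.2.2 + p.2.1 * m) T := by
    rintro ⟨i, k, a⟩ hp ⟨i', k', a'⟩ hp' h
    obtain ⟨-, -, ha, rfl⟩ := (hT ..).1 hp
    obtain ⟨-, -, ha', rfl⟩ := (hT ..).1 hp'
    obtain ⟨rfl, rfl⟩ := eq_of_apery_add_mul_eq hadd hmS ha ha' h
    rfl
  rw [himage, hinj.ncard_image, Set.ncard_coe_finset, card_sigma]
  refine sum_congr rfl fun i _ => ?_
  rw [card_product, card_range, Set.ncard_eq_toFinset_card _ (finite_apery_div_eq hm ρ i)]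

end NumericalSemigroup

open NumericalSemigroup in
theorem stmt13_general (S : Set ℕ)
    (hadd : ∀ a ∈ S, ∀ b ∈ S, a + b ∈ S)
    (m : ℕ) (hm : m ∈ S ∧ m ≠ 0 ∧ ∀ x ∈ S, x ≠ 0 → m ≤ x)
    (c : ℕ)
    (q ρ : ℕ) (hq : q = (c + m - 1) / m) (hρ : ρ = q * m - c)
    (L : Set ℕ) (hL : L = {x ∈ S | x < c})
    (A : Set ℕ) (hA : A = {x ∈ S | ¬ ∃ s ∈ S, x = m + s})
    (Ai : ℕ → Set ℕ)
    (hAi : ∀ i, Ai i = {x ∈ A | i * m ≤ x + ρ ∧ x + ρ < (i + 1) * m}) :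
    L.ncard = ∑ i ∈ Finset.range q, (q - i) * (Ai i).ncard := by
  obtain ⟨hmS, hm0, -⟩ := hm
  have hm : 0 < m := Nat.pos_of_ne_zero hm0
  have hqm : q * m = c + ρ := by
    have := Nat.lt_div_mul_add (a := c + m - 1) hm
    rw [← hq] at this
    omega
  have hAi' (i : ℕ) : Ai i = {a ∈ apery S m | (a + ρ) / m = i} := by
    rw [hAi, hA]
    ext a
    simp only [Set.mem_ofPred_eq, apery, Nat.div_eq_iff hm, add_one_mul]
    exact and_congr_right fun _ => by omega
  simp only [hL, hAi']
  exact ncard_lt_eq_sum_apery hadd hmS hm hqm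

theorem stmt13 (S : Set ℕ)
    (h0 : 0 ∈ S)
    (hadd : ∀ a ∈ S, ∀ b ∈ S, a + b ∈ S)
    (hfin : (Sᶜ : Set ℕ).Finite)
    (m : ℕ) (hm : m ∈ S ∧ m ≠ 0 ∧ ∀ x ∈ S, x ≠ 0 → m ≤ x)
    (c : ℕ) (hc : (∀ x, c ≤ x → x ∈ S) ∧ ∀ c', (∀ x, c' ≤ x → x ∈ S) → c ≤ c')
    (q ρ : ℕ) (hq : q = (c + m - 1) / m) (hρ : ρ = q * m - c)
    (L : Set ℕ) (hL : L = {x ∈ S | x < c})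
    (A : Set ℕ) (hA : A = {x ∈ S | ¬ ∃ s ∈ S, x = m + s})
    (Ai : ℕ → Set ℕ)
    (hAi : ∀ i, Ai i = {x ∈ A | i * m ≤ x + ρ ∧ x + ρ < (i + 1) * m}) :
    L.ncard = ∑ i ∈ Finset.range q, (q - i) * (Ai i).ncard :=
  stmt13_general S hadd m hm c q ρ hq hρ L hL A hA Ai hAi
end

section
/- Let S be a numerical semigroup with minimal generating set P, conductor c, left part L = S ∩ [0,c), depth q = ⌈c/m⌉, offset ρ = qm−c, and D_q = D ∩ [c,c+m) where D is the set of decomposable elements. Then W(S) := |P||L| − c satisfies W(S) ≥ W_0(S) := |P ∩ L|·|L| − q·|D_q| + ρ. -/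
/-!
For `c ≠ 0`, every `x ≥ c + m` is `m + (x - m)`, hence decomposable, so `P_q := P \ L` lies in
`[c, c + m)`; as every element of that interval is in `S` and nonzero, it splits into `P_q` and
`D_q`, whence `|P_q| + |D_q| = m`. With `c + ρ = qm` this gives `W(S) - W_0(S) = |P_q| (|L| - q)`,
and `|L| ≥ q` because `L` contains the multiples `0, m, …, (q - 1)m`.
-/

open Set

namespace NumericalSemigroup

def IsDecomposable (S : Set ℕ) (x : ℕ) : Prop :=
  ∃ a ∈ S, ∃ b ∈ S, a ≠ 0 ∧ b ≠ 0 ∧ a + b = x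

variable {S : Set ℕ} {m c : ℕ}

lemma isDecomposable_of_add_le (hm : m ∈ S) (hm0 : m ≠ 0) (hc : ∀ x, c ≤ x → x ∈ S)
    (hc0 : c ≠ 0) {x : ℕ} (hx : c + m ≤ x) : IsDecomposable S x :=
  ⟨m, hm, x - m, hc _ (by omega), hm0, by omega, by omega⟩

lemma primitives_subset_Iio (hm : m ∈ S) (hm0 : m ≠ 0) (hc : ∀ x, c ≤ x → x ∈ S) (hc0 : c ≠ 0) :
    {x ∈ S | x ≠ 0 ∧ ¬IsDecomposable S x} ⊆ Iio (c + m) := fun _ hx =>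
  lt_of_not_ge fun h => hx.2.2 (isDecomposable_of_add_le hm hm0 hc hc0 h)

lemma primitives_sdiff_eq (hm : m ∈ S) (hm0 : m ≠ 0) (hc : ∀ x, c ≤ x → x ∈ S) (hc0 : c ≠ 0) :
    {x ∈ S | x ≠ 0 ∧ ¬IsDecomposable S x} \ {x ∈ S | x < c} =
      Ico c (c + m) \ {x ∈ S | IsDecomposable S x} := by
  ext x
  have hlt := @primitives_subset_Iio S m c hm hm0 hc hc0 x
  simp only [mem_sdiff, mem_ofPred_eq, mem_Ico, mem_Iio] at hlt ⊢
  constructor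
  · rintro ⟨⟨hxS, hx0, hxd⟩, hxL⟩
    exact ⟨⟨by_contra fun h => hxL ⟨hxS, by omega⟩, hlt ⟨hxS, hx0, hxd⟩⟩, fun h => hxd h.2⟩
  · rintro ⟨⟨hcx, hxm⟩, hxd⟩
    exact ⟨⟨hc x hcx, by omega, fun h => hxd ⟨hc x hcx, h⟩⟩, by omega⟩

lemma ncard_primitives_sdiff_add_ncard_decomposables (hm : m ∈ S) (hm0 : m ≠ 0)
    (hc : ∀ x, c ≤ x → x ∈ S) (hc0 : c ≠ 0) :
    ({x ∈ S | x ≠ 0 ∧ ¬IsDecomposable S x} \ {x ∈ S | x < c}).ncard +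
      {x ∈ {x ∈ S | IsDecomposable S x} | c ≤ x ∧ x < c + m}.ncard = m := by
  have hDq : {x ∈ {x ∈ S | IsDecomposable S x} | c ≤ x ∧ x < c + m} =
      Ico c (c + m) ∩ {x ∈ S | IsDecomposable S x} := by
    ext x; simp only [mem_ofPred_eq, mem_inter_iff, mem_Ico]; tauto
  rw [primitives_sdiff_eq hm hm0 hc hc0, hDq, add_comm,
    ncard_inter_add_ncard_sdiff_eq_ncard _ _ (finite_Ico _ _), ncard_Ico_nat]
  omega

lemma mul_mem (h0 : 0 ∈ S) (hadd : ∀ a ∈ S, ∀ b ∈ S, a + b ∈ S) (hm : m ∈ S) (k : ℕ) :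
    k * m ∈ S := by
  induction k with
  | zero => simpa using h0
  | succ k ih => simpa [Nat.succ_mul] using hadd _ ih _ hm

lemma le_ncard_setOf_lt_of_mul_lt_add (h0 : 0 ∈ S) (hadd : ∀ a ∈ S, ∀ b ∈ S, a + b ∈ S)
    (hm : m ∈ S) (hm0 : m ≠ 0) {q : ℕ} (hq : q * m < c + m) : q ≤ {x ∈ S | x < c}.ncard := by
  have hsub : (· * m) '' Iio q ⊆ {x ∈ S | x < c} := by
    rintro _ ⟨k, hk, rfl⟩
    refine ⟨mul_mem h0 hadd hm k, ?_⟩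
    have : (k + 1) * m ≤ q * m := Nat.mul_le_mul_right m hk
    rw [add_mul, one_mul] at this
    show k * m < c
    omega
  calc q = ((· * m) '' Iio q).ncard := by
        rw [ncard_image_of_injective _ (mul_left_injective₀ hm0), ncard_Iio_nat]
    _ ≤ _ := ncard_le_ncard hsub ((finite_Iio c).subset fun _ hx => hx.2)

end NumericalSemigroup

lemma Nat.le_add_sub_one_div_mul_and_lt {c m : ℕ} (hm : 0 < m) :
    c ≤ (c + m - 1) / m * m ∧ (c + m - 1) / m * m < c + m := by
  have := Nat.div_add_mod' (c + m - 1) m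
  have := Nat.mod_lt (c + m - 1) hm
  omega

theorem stmt14_general (S : Set ℕ)
    (h0 : 0 ∈ S)
    (hadd : ∀ a ∈ S, ∀ b ∈ S, a + b ∈ S)
    (m : ℕ) (hm : m ∈ S ∧ m ≠ 0 ∧ ∀ x ∈ S, x ≠ 0 → m ≤ x)
    (c : ℕ) (hc : (∀ x, c ≤ x → x ∈ S) ∧ ∀ c', (∀ x, c' ≤ x → x ∈ S) → c ≤ c')
    (q ρ : ℕ) (hq : q = (c + m - 1) / m) (hρ : ρ = q * m - c)
    (P : Set ℕ)
    (hP : P = {x ∈ S | x ≠ 0 ∧ ¬ ∃ a ∈ S, ∃ b ∈ S, a ≠ 0 ∧ b ≠ 0 ∧ a + b = x})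
    (D : Set ℕ)
    (hD : D = {x ∈ S | ∃ a ∈ S, ∃ b ∈ S, a ≠ 0 ∧ b ≠ 0 ∧ a + b = x})
    (L : Set ℕ) (hL : L = {x ∈ S | x < c})
    (Dq : Set ℕ) (hDq : Dq = {x ∈ D | c ≤ x ∧ x < c + m}) :
    (P.ncard : ℤ) * L.ncard - c ≥
      (P ∩ L).ncard * L.ncard - q * Dq.ncard + ρ := by
  obtain ⟨hmS, hm0, -⟩ := hm
  rcases Nat.eq_zero_or_pos c with rfl | hc0
  · have hq0 : q = 0 := hq ▸ Nat.div_eq_of_lt (by omega)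
    simp [hL, hρ, hq0]
  obtain ⟨hcq, hqc⟩ := hq ▸ Nat.le_add_sub_one_div_mul_and_lt (c := c) (Nat.pos_of_ne_zero hm0)
  have hPfin : P.Finite :=
    (finite_Iio _).subset (hP ▸ NumericalSemigroup.primitives_subset_Iio hmS hm0 hc.1 hc0.ne')
  have hPsplit := ncard_inter_add_ncard_sdiff_eq_ncard P L hPfin
  have hLq : q ≤ L.ncard :=
    hL ▸ NumericalSemigroup.le_ncard_setOf_lt_of_mul_lt_add h0 hadd hmS hm0 hqc
  have hm_eq : (P \ L).ncard + Dq.ncard = m := by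
    subst hP hD hL hDq
    exact NumericalSemigroup.ncard_primitives_sdiff_add_ncard_decomposables hmS hm0 hc.1 hc0.ne'
  have hρ' : (ρ : ℤ) = q * m - c := by rw [hρ]; push_cast [hcq]; ring
  have hLq' : ((P \ L).ncard : ℤ) * q ≤ (P \ L).ncard * L.ncard := by gcongr
  rw [← hPsplit, hρ', ← hm_eq]
  push_cast
  linarith

theorem stmt14 (S : Set ℕ)
    (h0 : 0 ∈ S)
    (hadd : ∀ a ∈ S, ∀ b ∈ S, a + b ∈ S)
    (hfin : (Sᶜ : Set ℕ).Finite)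
    (m : ℕ) (hm : m ∈ S ∧ m ≠ 0 ∧ ∀ x ∈ S, x ≠ 0 → m ≤ x)
    (c : ℕ) (hc : (∀ x, c ≤ x → x ∈ S) ∧ ∀ c', (∀ x, c' ≤ x → x ∈ S) → c ≤ c')
    (q ρ : ℕ) (hq : q = (c + m - 1) / m) (hρ : ρ = q * m - c)
    (P : Set ℕ)
    (hP : P = {x ∈ S | x ≠ 0 ∧ ¬ ∃ a ∈ S, ∃ b ∈ S, a ≠ 0 ∧ b ≠ 0 ∧ a + b = x})
    (D : Set ℕ)
    (hD : D = {x ∈ S | ∃ a ∈ S, ∃ b ∈ S, a ≠ 0 ∧ b ≠ 0 ∧ a + b = x})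
    (L : Set ℕ) (hL : L = {x ∈ S | x < c})
    (Dq : Set ℕ) (hDq : Dq = {x ∈ D | c ≤ x ∧ x < c + m}) :
    (P.ncard : ℤ) * L.ncard - c ≥
      (P ∩ L).ncard * L.ncard - q * Dq.ncard + ρ :=
  stmt14_general S h0 hadd m hm c hc q ρ hq hρ P hP D hD L hL Dq hDq
end
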